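/- arXiv:2110.14024 — 4 statements merged into one kernel-verified Lean document; each statement's English description precedes it below -/
import Mathlib

section
/- Let a, b, α, β ∈ ℝ satisfy a < b, α < 0, β ≥ 0 and 4a + α² > 4b + β². Then there exist constants L ∈ ℝ, M > 0 and radii r_i, r_o with 0 < r_i < r_o ≤ √M such that: L − r_i²/2 + M·log r_i = a, L − r_o²/2 + M·log r_o = b, M − r_i² = −α·r_i, and M − r_o² = β·r_o (that is, the rotationally symmetric model u = L − |x|²/2 + M·log|x| solves the overdetermined problem with data (a,α,b,β) on the annulus {r_i < |x| < r_o}). -/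
noncomputable def modelR (t M : ℝ) : ℝ := (-t + Real.sqrt (t ^ 2 + 4 * M)) / 2

lemma modelR_props (t M : ℝ) (ht : 0 ≤ t) (hM : 0 < M) :
    0 < modelR t M ∧ (modelR t M) ^ 2 = M - t * modelR t M ∧ modelR t M ≤ Real.sqrt M ∧
    M / (t + Real.sqrt M) ≤ modelR t M := by
  set s := Real.sqrt (t ^ 2 + 4 * M) with hs
  have hs0 : 0 ≤ s := Real.sqrt_nonneg _
  have hs2 : s ^ 2 = t ^ 2 + 4 * M := Real.sq_sqrt (by positivity)
  have hst : t < s := by nlinarith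
  have hu0 : 0 ≤ Real.sqrt M := Real.sqrt_nonneg _
  have hu2 : (Real.sqrt M) ^ 2 = M := Real.sq_sqrt hM.le
  have hu_pos : 0 < Real.sqrt M := Real.sqrt_pos.2 hM
  have hpos : 0 < modelR t M := by unfold modelR; rw [← hs]; linarith
  have heq : (modelR t M) ^ 2 = M - t * modelR t M := by
    unfold modelR; rw [← hs]; linear_combination hs2 / 4
  have hle : modelR t M ≤ Real.sqrt M := by
    nlinarith [heq, hpos, mul_nonneg ht hpos.le]
  have hid : modelR t M * (s + t) = 2 * M := by
    unfold modelR; rw [← hs]; linear_combination hs2 / 2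
  have hs_le : s ≤ t + 2 * Real.sqrt M := by nlinarith
  have hlb : M / (t + Real.sqrt M) ≤ modelR t M := by
    rw [div_le_iff₀ (by linarith)]
    nlinarith [hid, hpos, hs_le]
  exact ⟨hpos, heq, hle, hlb⟩

lemma modelR_lt (r t M : ℝ) (hr : 0 ≤ r) (hrt : r < t) (hM : 0 < M) :
    modelR t M < modelR r M := by
  have h1 := Real.sqrt_nonneg (t ^ 2 + 4 * M)
  have h2 := Real.sqrt_nonneg (r ^ 2 + 4 * M)
  have h1' : (Real.sqrt (t ^ 2 + 4 * M)) ^ 2 = t ^ 2 + 4 * M := Real.sq_sqrt (by positivity)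
  have h2' : (Real.sqrt (r ^ 2 + 4 * M)) ^ 2 = r ^ 2 + 4 * M := Real.sq_sqrt (by positivity)
  have hg1 : t < Real.sqrt (t ^ 2 + 4 * M) := by nlinarith
  have hg2 : r < Real.sqrt (r ^ 2 + 4 * M) := by nlinarith
  unfold modelR
  have : Real.sqrt (t ^ 2 + 4 * M) - Real.sqrt (r ^ 2 + 4 * M) < t - r := by
    nlinarith [hg1, hg2, h1', h2']
  linarith

/-- Key inequality: with the Neumann relations, the Dirichlet gap is bounded below. -/
lemma key_ineq (M ri ro α β : ℝ) (hM : 0 < M) (hri : 0 < ri) (hlt : ri < ro) (hβ : 0 ≤ β)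
    (h1 : ri ^ 2 = M + α * ri) (h2 : ro ^ 2 = M - β * ro) :
    ri ^ 2 / (M + ri ^ 2) * (α ^ 2 - β ^ 2) / 2 ≤
      M * Real.log ro - M * Real.log ri - (ro ^ 2 - ri ^ 2) / 2 := by
  set c : ℝ := ri ^ 2 / (M + ri ^ 2) with hc
  have hro : 0 < ro := hri.trans hlt
  have hden : 0 < M + ri ^ 2 := by positivity
  have hcM : c * (M + ri ^ 2) = ri ^ 2 := by rw [hc]; field_simp
  set H : ℝ → ℝ := fun x => M * Real.log x + (c - 1) * x ^ 2 / 2 + c * M ^ 2 / 2 * (x ^ 2)⁻¹ with hH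
  have hderiv : ∀ x, x ≠ 0 → HasDerivAt H
      (M * x⁻¹ + (c - 1) * (2 * x) / 2 + c * M ^ 2 / 2 * (-(2 * x ^ 1) / (x ^ 2) ^ 2)) x := by
    intro x hx
    have h1' := (Real.hasDerivAt_log hx).const_mul M
    have h2' := ((hasDerivAt_pow 2 x).const_mul (c - 1)).div_const 2
    have h3' := ((hasDerivAt_pow 2 x).inv (pow_ne_zero 2 hx)).const_mul (c * M ^ 2 / 2)
    have := (h1'.add h2').add h3'
    refine this.congr_deriv ?_
    norm_num
  have hmono : MonotoneOn H (Set.Icc ri ro) := by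
    apply monotoneOn_of_hasDerivWithinAt_nonneg (f' := fun x =>
        M * x⁻¹ + (c - 1) * (2 * x) / 2 + c * M ^ 2 / 2 * (-(2 * x ^ 1) / (x ^ 2) ^ 2))
        (convex_Icc ri ro)
    · intro x hx
      have hx0 : 0 < x := lt_of_lt_of_le hri hx.1
      exact ((hderiv x hx0.ne').continuousAt).continuousWithinAt
    · intro x hx
      have hx0 : 0 < x := lt_of_lt_of_le hri (interior_subset hx).1
      exact (hderiv x hx0.ne').hasDerivWithinAt
    · intro x hx
      rw [interior_Icc] at hx
      have hx0 : 0 < x := lt_of_lt_of_le hri hx.1.le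
      have hxi : ri ^ 2 ≤ x ^ 2 := by nlinarith [hx.1]
      have hxo : x ^ 2 ≤ M := by nlinarith [hx.2, hro]
      have e : M * x⁻¹ + (c - 1) * (2 * x) / 2 + c * M ^ 2 / 2 * (-(2 * x ^ 1) / (x ^ 2) ^ 2)
          = M * ((M - x ^ 2) * (x ^ 2 - ri ^ 2)) / ((M + ri ^ 2) * x ^ 3) := by
        rw [hc]
        field_simp
        ring
      rw [e]
      apply div_nonneg
      · exact mul_nonneg hM.le (mul_nonneg (by linarith) (by linarith))
      · positivity
  have hHle : H ri ≤ H ro := hmono ⟨le_refl ri, hlt.le⟩ ⟨hlt.le, le_refl ro⟩ hlt.le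
  have hri2 : (ri : ℝ) ^ 2 ≠ 0 := by positivity
  have hro2 : (ro : ℝ) ^ 2 ≠ 0 := by positivity
  have e1 : α ^ 2 = M ^ 2 * (ri ^ 2)⁻¹ - 2 * M + ri ^ 2 := by
    have hmr : M - ri ^ 2 = -(α * ri) := by linarith
    field_simp
    nlinarith [hmr]
  have e2 : β ^ 2 = M ^ 2 * (ro ^ 2)⁻¹ - 2 * M + ro ^ 2 := by
    have hmr : M - ro ^ 2 = β * ro := by linarith
    field_simp
    nlinarith [hmr]
  have hHle' : M * Real.log ri + (c - 1) * ri ^ 2 / 2 + c * M ^ 2 / 2 * (ri ^ 2)⁻¹ ≤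
      M * Real.log ro + (c - 1) * ro ^ 2 / 2 + c * M ^ 2 / 2 * (ro ^ 2)⁻¹ := hHle
  calc c * (α ^ 2 - β ^ 2) / 2
      = c * ((M ^ 2 * (ri ^ 2)⁻¹ - 2 * M + ri ^ 2) - (M ^ 2 * (ro ^ 2)⁻¹ - 2 * M + ro ^ 2)) / 2 := by
        rw [e1, e2]
    _ ≤ M * Real.log ro - M * Real.log ri - (ro ^ 2 - ri ^ 2) / 2 := by nlinarith [hHle']

noncomputable def modelG (a b α β M : ℝ) : ℝ :=
  M * (Real.log (modelR β M) - Real.log (modelR (-α) M))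
    - ((modelR β M) ^ 2 - (modelR (-α) M) ^ 2) / 2 - (b - a)


lemma modelG_radii (α β M : ℝ) (hα : α < 0) (hβ : 0 ≤ β) (hβα : β < -α) (hM : 0 < M) :
    0 < modelR (-α) M ∧ modelR (-α) M < modelR β M ∧
    (modelR (-α) M) ^ 2 = M + α * modelR (-α) M ∧
    (modelR β M) ^ 2 = M - β * modelR β M ∧
    modelR β M ≤ Real.sqrt M ∧ M / (-α + Real.sqrt M) ≤ modelR (-α) M := by
  have hα' : 0 < -α := by linarith
  obtain ⟨hi1, hi2, hi3, hi4⟩ := modelR_props (-α) M hα'.le hM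
  obtain ⟨ho1, ho2, ho3, ho4⟩ := modelR_props β M hβ hM
  exact ⟨hi1, modelR_lt β (-α) M hβ hβα hM, by linarith [hi2], ho2, ho3, hi4⟩

set_option maxHeartbeats 1000000 in
lemma modelG_neg (a b α β M : ℝ) (hab : a < b) (hα : α < 0) (hβ : 0 ≤ β) (hβα : β < -α)
    (hM : 0 < M) (hu : -α * Real.sqrt M ≤ (b - a) / 2) : modelG a b α β M < 0 := by
  have hα' : 0 < -α := by linarith
  obtain ⟨hi1, hlt, hi2, ho2, ho3, hi4⟩ := modelG_radii α β M hα hβ hβα hM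
  have ho1 : 0 < modelR β M := hi1.trans hlt
  obtain ⟨u, hu_def⟩ : ∃ u : ℝ, u = Real.sqrt M := ⟨_, rfl⟩
  rw [← hu_def] at ho3 hi4 hu
  have hu_pos : 0 < u := by rw [hu_def]; exact Real.sqrt_pos.2 hM
  have hu2 : u ^ 2 = M := by rw [hu_def]; exact Real.sq_sqrt hM.le
  have hlb_pos : 0 < M / (-α + u) := div_pos hM (by linarith)
  have hlog : Real.log (modelR β M) - Real.log (modelR (-α) M)
      ≤ modelR β M / modelR (-α) M - 1 := by
    rw [← Real.log_div ho1.ne' hi1.ne']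
    exact Real.log_le_sub_one_of_pos (div_pos ho1 hi1)
  have hratio : modelR β M / modelR (-α) M ≤ u / (M / (-α + u)) :=
    div_le_div₀ hu_pos.le ho3 hlb_pos hi4
  have hratio' : u / (M / (-α + u)) = u * (-α + u) / M := by
    rw [div_div_eq_mul_div]
  have hbound : M * (Real.log (modelR β M) - Real.log (modelR (-α) M)) ≤ -α * u := by
    have h1 : M * (Real.log (modelR β M) - Real.log (modelR (-α) M))
        ≤ M * (u * (-α + u) / M - 1) := by
      apply mul_le_mul_of_nonneg_left _ hM.le
      calc Real.log (modelR β M) - Real.log (modelR (-α) M)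
          ≤ modelR β M / modelR (-α) M - 1 := hlog
        _ ≤ u * (-α + u) / M - 1 := by rw [← hratio']; linarith [hratio]
    have h2 : M * (u * (-α + u) / M - 1) = -α * u := by
      field_simp
      linear_combination hu2
    linarith
  have hmono2 : (modelR (-α) M) ^ 2 ≤ (modelR β M) ^ 2 := by nlinarith [hlt, hi1]
  unfold modelG
  linarith [hbound, hmono2, hu, hab]

set_option maxHeartbeats 1000000 in
lemma modelG_pos (a b α β M : ℝ) (hab : a < b) (hα : α < 0) (hβ : 0 ≤ β) (hβα : β < -α)
    (hdiff4 : 4 * (b - a) < α ^ 2 - β ^ 2) (hM : 0 < M)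
    (hu1 : -α ≤ Real.sqrt M)
    (hu2 : (-α) * (α ^ 2 - β ^ 2) < Real.sqrt M * ((α ^ 2 - β ^ 2) - 4 * (b - a))) :
    0 < modelG a b α β M := by
  have hα' : 0 < -α := by linarith
  have hdiff : 0 < α ^ 2 - β ^ 2 := by nlinarith [hβα, hβ, hα']
  obtain ⟨hi1, hlt, hi2, ho2, ho3, hi4⟩ := modelG_radii α β M hα hβ hβα hM
  have hKey := key_ineq M (modelR (-α) M) (modelR β M) α β hM hi1 hlt hβ hi2 ho2
  obtain ⟨ri, hri_def⟩ : ∃ r : ℝ, r = modelR (-α) M := ⟨_, rfl⟩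
  obtain ⟨ro, hro_def⟩ : ∃ r : ℝ, r = modelR β M := ⟨_, rfl⟩
  rw [← hri_def] at hKey hi1 hi2 hlt
  rw [← hro_def] at hKey hlt ho2
  obtain ⟨u, hu_def⟩ : ∃ u : ℝ, u = Real.sqrt M := ⟨_, rfl⟩
  rw [← hu_def] at hu1 hu2
  have hu_pos : 0 < u := by rw [hu_def]; exact Real.sqrt_pos.2 hM
  have huM : u ^ 2 = M := by rw [hu_def]; exact Real.sq_sqrt hM.le
  have hri2M : ri ^ 2 ≤ M := by nlinarith [mul_pos hα' hi1]
  have hri_le : ri ≤ u := by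
    nlinarith [huM, hu_pos, hri2M, hi1]
  have hri_lb : u ^ 2 + α * u ≤ ri ^ 2 := by nlinarith [hi2, hri_le, hi1]
  have hstep : (b - a) < ri ^ 2 / (M + ri ^ 2) * (α ^ 2 - β ^ 2) / 2 := by
    rw [div_mul_eq_mul_div, div_div, lt_div_iff₀ (by positivity)]
    have hD2 : M + ri ^ 2 ≤ 2 * u ^ 2 := by nlinarith [hri2M]
    nlinarith [mul_lt_mul_of_pos_left hu2 hu_pos,
      mul_le_mul_of_nonneg_right hri_lb hdiff.le,
      mul_le_mul_of_nonneg_right hD2 (by linarith : (0:ℝ) ≤ 2 * (b - a)), huM]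
  have hfin : (b - a) < M * Real.log ro - M * Real.log ri - (ro ^ 2 - ri ^ 2) / 2 :=
    lt_of_lt_of_le hstep hKey
  rw [hri_def, hro_def] at hfin
  unfold modelG
  linarith [hfin]

/-- **Lemma 2.3.** If `a < b`, `α < 0`, `β ≥ 0` and `4a + α² > 4b + β²`, then there
exist `L` and `M > 0` and radii `0 < r_i < r_o ≤ √M` such that the rotationally
symmetric model `u = L - |x|²/2 + M·log|x|` solves the overdetermined problem with
data `(a, α, b, β)` on the annulus `{r_i < |x| < r_o}`: it attains the Dirichlet
values `a`, `b` and the Neumann values `α`, `β` at the radii `r_i`, `r_o`. -/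
theorem exists_model_increasing (a b α β : ℝ) (hab : a < b) (hα : α < 0) (hβ : 0 ≤ β)
    (h : 4 * a + α ^ 2 > 4 * b + β ^ 2) :
    ∃ L M r_i r_o : ℝ, 0 < M ∧ 0 < r_i ∧ r_i < r_o ∧ r_o ≤ Real.sqrt M ∧
      L - r_i ^ 2 / 2 + M * Real.log r_i = a ∧
      L - r_o ^ 2 / 2 + M * Real.log r_o = b ∧
      M - r_i ^ 2 = -α * r_i ∧
      M - r_o ^ 2 = β * r_o := by
  have hα' : 0 < -α := by linarith
  have hβα : β < -α := by nlinarith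
  have hdiff : 0 < α ^ 2 - β ^ 2 := by nlinarith
  have hdiff4 : 4 * (b - a) < α ^ 2 - β ^ 2 := by linarith
  obtain ⟨Y, hY_def⟩ : ∃ Y : ℝ, Y = (-α) * (α ^ 2 - β ^ 2) / ((α ^ 2 - β ^ 2) - 4 * (b - a)) :=
    ⟨_, rfl⟩
  have hY : 0 ≤ Y := by
    rw [hY_def]
    exact div_nonneg (mul_nonneg hα'.le hdiff.le) (by linarith)
  obtain ⟨M₀, hM₀_def⟩ : ∃ M₀ : ℝ, M₀ = ((b - a) / (2 * (-α))) ^ 2 := ⟨_, rfl⟩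
  have hM₀ : 0 < M₀ := by
    rw [hM₀_def]
    exact pow_pos (div_pos (by linarith) (by linarith)) 2
  obtain ⟨M₁, hM₁_def⟩ : ∃ M₁ : ℝ, M₁ = α ^ 2 + Y ^ 2 + M₀ + 1 := ⟨_, rfl⟩
  have hM₁ : 0 < M₁ := by nlinarith [sq_nonneg α, sq_nonneg Y]
  have hM₀₁ : M₀ < M₁ := by nlinarith [sq_nonneg α, sq_nonneg Y]
  have hg0 : modelG a b α β M₀ < 0 := by
    apply modelG_neg a b α β M₀ hab hα hβ hβα hM₀
    have : Real.sqrt M₀ = (b - a) / (2 * (-α)) := by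
      rw [hM₀_def]
      exact Real.sqrt_sq (le_of_lt (div_pos (by linarith) (by linarith)))
    rw [this]
    rw [mul_div_assoc']
    rw [div_le_div_iff₀ (by linarith) (by norm_num)]
    ring_nf
    nlinarith [hα']
  have hg1 : 0 < modelG a b α β M₁ := by
    apply modelG_pos a b α β M₁ hab hα hβ hβα hdiff4 hM₁
    · calc -α = Real.sqrt (α ^ 2) := by rw [Real.sqrt_sq_eq_abs, abs_of_neg hα]
        _ ≤ Real.sqrt M₁ := Real.sqrt_le_sqrt (by nlinarith [sq_nonneg Y, hM₀])
    · have hYlt : Y < Real.sqrt M₁ := by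
        calc Y = Real.sqrt (Y ^ 2) := by rw [Real.sqrt_sq hY]
          _ < Real.sqrt M₁ := Real.sqrt_lt_sqrt (sq_nonneg Y) (by nlinarith [sq_nonneg α, hM₀])
      have h4K : 0 < (α ^ 2 - β ^ 2) - 4 * (b - a) := by linarith
      have hYe : Y * ((α ^ 2 - β ^ 2) - 4 * (b - a)) = (-α) * (α ^ 2 - β ^ 2) := by
        rw [hY_def]
        field_simp
      calc (-α) * (α ^ 2 - β ^ 2) = Y * ((α ^ 2 - β ^ 2) - 4 * (b - a)) := hYe.symm
        _ < Real.sqrt M₁ * ((α ^ 2 - β ^ 2) - 4 * (b - a)) :=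
          mul_lt_mul_of_pos_right hYlt h4K
  have hRc : ∀ t : ℝ, Continuous fun M => modelR t M := by
    intro t
    unfold modelR
    exact (continuous_const.add ((continuous_const.add
      (continuous_const.mul continuous_id)).sqrt)).div_const 2
  have hne : ∀ t : ℝ, 0 ≤ t → ∀ M ∈ Set.Icc M₀ M₁, modelR t M ≠ 0 := by
    intro t ht M hM
    exact ((modelR_props t M ht (hM₀.trans_le hM.1)).1).ne'
  have hgc : ContinuousOn (fun M => modelG a b α β M) (Set.Icc M₀ M₁) := by
    unfold modelG
    apply ContinuousOn.sub _ continuousOn_const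
    apply ContinuousOn.sub
    · exact continuousOn_id.mul
        (((hRc β).continuousOn.log (hne β hβ)).sub
          ((hRc (-α)).continuousOn.log (hne (-α) hα'.le)))
    · exact (((((hRc β).pow 2).sub ((hRc (-α)).pow 2)).div_const 2)).continuousOn
  have hmem : (0:ℝ) ∈ Set.Icc (modelG a b α β M₀) (modelG a b α β M₁) := ⟨hg0.le, hg1.le⟩
  obtain ⟨M, hMIcc, hgM⟩ := intermediate_value_Icc hM₀₁.le hgc hmem
  have hM : 0 < M := hM₀.trans_le hMIcc.1
  obtain ⟨hi1, hlt, hi2, ho2, ho3, _⟩ := modelG_radii α β M hα hβ hβα hM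
  refine ⟨a + (modelR (-α) M) ^ 2 / 2 - M * Real.log (modelR (-α) M), M,
    modelR (-α) M, modelR β M, hM, hi1, hlt, ho3, by ring, ?_, by linarith, by linarith⟩
  have hgM' : M * (Real.log (modelR β M) - Real.log (modelR (-α) M))
      - ((modelR β M) ^ 2 - (modelR (-α) M) ^ 2) / 2 - (b - a) = 0 := hgM
  linarith [hgM']
end

section
/- Let a, b, α, β ∈ ℝ satisfy a > b, α ≥ 0, β < 0, 4a + α² > 4b + β² and additionally 2a + α² ≤ 2b + β². Then there exist constants L ∈ ℝ, M ≥ 0 and radii r_i, r_o with √M ≤ r_i < r_o such that: L − r_i²/2 + M·log r_i = a, L − r_o²/2 + M·log r_o = b, M − r_i² = −α·r_i, and M − r_o² = β·r_o (that is, the rotationally symmetric model u = L − |x|²/2 + M·log|x| solves the overdetermined problem with data (a,α,b,β) on the annulus {r_i < |x| < r_o}). -/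
open Real Filter Set

/-- quadratic lower bound for log -/
lemma log_quad_lower {t : ℝ} (ht : 1 ≤ t) : 2*(t-1) - (t^2-1)/2 ≤ Real.log t := by
  set f : ℝ → ℝ := fun x => Real.log x - (2*(x-1) - (x^2-1)/2) with hf
  have hder : ∀ x : ℝ, 0 < x → HasDerivAt f (x⁻¹ - (2 - x)) x := by
    intro x hx
    have h1 := Real.hasDerivAt_log hx.ne'
    have h2 : HasDerivAt (fun x : ℝ => 2*(x-1) - (x^2-1)/2) (2 - x) x := by
      have : HasDerivAt (fun x : ℝ => 2*(x-1) - (x^2-1)/2) (2*1 - ((2:ℕ):ℝ) * x^(2-1)/2) x :=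
        (((hasDerivAt_id x).sub_const 1).const_mul 2).sub
        ((((hasDerivAt_pow 2 x)).sub_const 1).div_const 2)
      convert this using 1
      ring
    exact h1.sub h2
  have hmono : MonotoneOn f (Set.Ici 1) := by
    apply monotoneOn_of_deriv_nonneg (convex_Ici 1)
    · apply ContinuousOn.sub
      · apply ContinuousOn.log continuousOn_id
        intro x hx; exact ne_of_gt (lt_of_lt_of_le one_pos hx)
      · fun_prop
    · intro x hx
      rw [interior_Ici] at hx
      exact ((hder x (lt_trans one_pos hx)).differentiableAt).differentiableWithinAt
    · intro x hx
      rw [interior_Ici] at hx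
      have hx0 : (0:ℝ) < x := lt_trans one_pos hx
      rw [(hder x hx0).deriv]
      have : x⁻¹ - (2 - x) = (x-1)^2/x := by field_simp; ring
      rw [this]; positivity
  have h0 : f 1 ≤ f t := hmono (by simp) (by simpa using ht) ht
  simp only [hf, Real.log_one] at h0 ⊢
  linarith

noncomputable def Dfun (α β t : ℝ) : ℝ :=
  ((-α - β*t)/(t^2-1))^2*(t^2-1)/2
    - (((-α - β*t)/(t^2-1))^2 - α*((-α - β*t)/(t^2-1))) * Real.log t

lemma Dfun_eq (α β t : ℝ) (ht : 1 < t) :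
    Dfun α β t = (-α - β*t)^2/(2*(t^2-1))
      - ((-α - β*t)^2/(t^2-1)^2) * Real.log t
      + (α*(-α - β*t)/(t^2-1)) * Real.log t := by
  have hs : t^2 - 1 ≠ 0 := by nlinarith
  unfold Dfun
  field_simp
  ring

lemma Dfun_le (α β t : ℝ) (hα : 0 ≤ α) (hc : 0 < -α - β*t) (ht : 1 < t) :
    Dfun α β t ≤ (-α - β*t)^2/(t+1)^2 + α*(-α - β*t)/(t+1) := by
  have hs : (0:ℝ) < t^2 - 1 := by nlinarith
  have hlg1 : Real.log t ≤ t - 1 := Real.log_le_sub_one_of_pos (by linarith)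
  have hlg2 : 2*(t-1) - (t^2-1)/2 ≤ Real.log t := log_quad_lower ht.le
  rw [Dfun_eq α β t ht]
  have e1 : -((-α - β*t)^2/(t^2-1)^2) * Real.log t
      ≤ -((-α - β*t)^2/(t^2-1)^2) * (2*(t-1) - (t^2-1)/2) := by
    apply mul_le_mul_of_nonpos_left hlg2
    have : (0:ℝ) ≤ (-α - β*t)^2/(t^2-1)^2 := by positivity
    linarith
  have e2 : (α*(-α - β*t)/(t^2-1)) * Real.log t ≤ (α*(-α - β*t)/(t^2-1)) * (t-1) := by
    apply mul_le_mul_of_nonneg_left hlg1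
    positivity
  have key : (-α - β*t)^2/(2*(t^2-1))
      - ((-α - β*t)^2/(t^2-1)^2) * (2*(t-1) - (t^2-1)/2)
      + (α*(-α - β*t)/(t^2-1)) * (t-1)
      = (-α - β*t)^2/(t+1)^2 + α*(-α - β*t)/(t+1) := by
    have h1 : t^2 - 1 ≠ 0 := hs.ne'
    have h2 : t + 1 ≠ 0 := by nlinarith
    field_simp
    ring
  nlinarith [e1, e2]

lemma Dfun_ge (α β t : ℝ) (hα : 0 ≤ α) (hc : 0 < -α - β*t) (ht : 1 < t) :
    (-α - β*t)^2/(2*(t+1)^2) ≤ Dfun α β t := by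
  have hs : (0:ℝ) < t^2 - 1 := by nlinarith
  have hlg1 : Real.log t ≤ t - 1 := Real.log_le_sub_one_of_pos (by linarith)
  have hlg0 : 0 ≤ Real.log t := Real.log_nonneg ht.le
  rw [Dfun_eq α β t ht]
  have e1 : -((-α - β*t)^2/(t^2-1)^2) * (t-1) ≤ -((-α - β*t)^2/(t^2-1)^2) * Real.log t := by
    apply mul_le_mul_of_nonpos_left hlg1
    have : (0:ℝ) ≤ (-α - β*t)^2/(t^2-1)^2 := by positivity
    linarith
  have e2 : 0 ≤ (α*(-α - β*t)/(t^2-1)) * Real.log t := by positivity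
  have key : (-α - β*t)^2/(2*(t+1)^2)
      = (-α - β*t)^2/(2*(t^2-1)) - ((-α - β*t)^2/(t^2-1)^2) * (t-1) := by
    have h1 : t^2 - 1 ≠ 0 := hs.ne'
    have h2 : t + 1 ≠ 0 := by nlinarith
    field_simp
    ring
  nlinarith [e1, e2]

lemma build (a b α β t r : ℝ) (hα : 0 ≤ α) (ht : 1 < t) (hrpos : 0 < r)
    (hkey : r * (t^2 - 1) = -α - β*t) (hrα : α ≤ r)
    (hDt : r^2*(t^2-1)/2 - (r^2 - α*r) * Real.log t = a - b) :
    ∃ L M r_i r_o : ℝ, 0 ≤ M ∧ Real.sqrt M ≤ r_i ∧ r_i < r_o ∧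
      L - r_i ^ 2 / 2 + M * Real.log r_i = a ∧
      L - r_o ^ 2 / 2 + M * Real.log r_o = b ∧
      M - r_i ^ 2 = -α * r_i ∧
      M - r_o ^ 2 = β * r_o := by
  have hlogtr : Real.log (t*r) = Real.log t + Real.log r :=
    Real.log_mul (by linarith) hrpos.ne'
  refine ⟨a + r^2/2 - (r^2 - α*r) * Real.log r, r^2 - α*r, r, t*r, ?_, ?_, ?_, ?_, ?_, ?_, ?_⟩
  · nlinarith
  · have hM : r^2 - α*r ≤ r^2 := by nlinarith
    calc Real.sqrt (r^2 - α*r) ≤ Real.sqrt (r^2) := Real.sqrt_le_sqrt hM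
    _ = r := by rw [Real.sqrt_sq hrpos.le]
  · nlinarith
  · ring
  · rw [hlogtr]
    nlinarith [hDt]
  · ring
  · nlinarith [hkey]

lemma main_ivt (a b α β : ℝ) (hab : a > b) (hα : 0 ≤ α) (hβ : β < 0)
    (hba : α < -β)
    (h : 4 * a + α ^ 2 > 4 * b + β ^ 2)
    (t_hi : ℝ) (ht1 : 1 < t_hi) (hcap : α * t_hi ≤ -β)
    (hD : a - b ≤ Dfun α β t_hi) :
    ∃ L M r_i r_o : ℝ, 0 ≤ M ∧ Real.sqrt M ≤ r_i ∧ r_i < r_o ∧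
      L - r_i ^ 2 / 2 + M * Real.log r_i = a ∧
      L - r_o ^ 2 / 2 + M * Real.log r_o = b ∧
      M - r_i ^ 2 = -α * r_i ∧
      M - r_o ^ 2 = β * r_o := by
  -- the upper bound function U
  set U : ℝ → ℝ := fun t => (-α - β*t)^2/(t+1)^2 + α*(-α - β*t)/(t+1) with hU
  have hU1 : U 1 < a - b := by
    have : U 1 = (-α - β)^2/4 + α*(-α - β)/2 := by norm_num [hU]
    rw [this]; nlinarith
  have hUcont : ContinuousAt U 1 := by
    apply ContinuousAt.add
    · exact ContinuousAt.div (by fun_prop) (by fun_prop) (by norm_num)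
    · exact ContinuousAt.div (by fun_prop) (by fun_prop) (by norm_num)
  have hev : ∀ᶠ t in nhds 1, U t < a - b := hUcont.eventually_lt_const hU1
  obtain ⟨ε, hε, hball⟩ := Metric.eventually_nhds_iff.mp hev
  -- pick t₀
  set t₀ : ℝ := min (1 + ε/2) ((1 + t_hi)/2) with ht₀def
  have ht₀1 : 1 < t₀ := by
    apply lt_min (by linarith) (by linarith)
  have ht₀hi : t₀ < t_hi := by
    calc t₀ ≤ (1 + t_hi)/2 := min_le_right _ _
    _ < t_hi := by linarith
  have hUt₀ : U t₀ < a - b := by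
    apply hball
    have h1 : t₀ ≤ 1 + ε/2 := min_le_left _ _
    rw [Real.dist_eq, abs_of_nonneg (by linarith)]
    linarith
  have hcpos : ∀ t : ℝ, 1 ≤ t → 0 < -α - β*t := by
    intro t ht
    nlinarith
  have hDt₀ : Dfun α β t₀ < a - b :=
    lt_of_le_of_lt (Dfun_le α β t₀ hα (hcpos t₀ ht₀1.le) ht₀1) hUt₀
  -- continuity of Dfun on [t₀, t_hi]
  have hcont : ContinuousOn (Dfun α β) (Set.Icc t₀ t_hi) := by
    have hsub : ∀ t ∈ Set.Icc t₀ t_hi, t^2 - 1 ≠ 0 := by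
      rintro t ⟨h1, h2⟩; nlinarith
    have hpos : ∀ t ∈ Set.Icc t₀ t_hi, t ≠ 0 := by
      rintro t ⟨h1, h2⟩; nlinarith
    unfold Dfun
    apply ContinuousOn.sub
    · apply ContinuousOn.div_const
      apply ContinuousOn.mul
      · exact ContinuousOn.pow (ContinuousOn.div (by fun_prop) (by fun_prop) hsub) 2
      · fun_prop
    · apply ContinuousOn.mul
      · apply ContinuousOn.sub
        · exact ContinuousOn.pow (ContinuousOn.div (by fun_prop) (by fun_prop) hsub) 2
        · exact ContinuousOn.mul continuousOn_const
            (ContinuousOn.div (by fun_prop) (by fun_prop) hsub)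
      · exact ContinuousOn.log continuousOn_id hpos
  -- IVT
  have hmem : a - b ∈ Set.Icc (Dfun α β t₀) (Dfun α β t_hi) := ⟨hDt₀.le, hD⟩
  obtain ⟨t, htmem, htval⟩ := intermediate_value_Icc ht₀hi.le hcont hmem
  obtain ⟨htlo, hthi⟩ := htmem
  have ht : 1 < t := lt_of_lt_of_le ht₀1 htlo
  have hs : (0:ℝ) < t^2 - 1 := by nlinarith
  have hc : 0 < -α - β*t := hcpos t ht.le
  obtain ⟨r, hrdef⟩ : ∃ r : ℝ, r = (-α - β*t)/(t^2-1) := ⟨_, rfl⟩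
  have hrpos : 0 < r := by rw [hrdef]; positivity
  have hkey : r * (t^2 - 1) = -α - β*t := by
    rw [hrdef]; field_simp
  have hrα : α ≤ r := by
    have h1 : α * t ≤ -β := le_trans (by nlinarith) hcap
    nlinarith
  have hDt : r^2*(t^2-1)/2 - (r^2 - α*r) * Real.log t = a - b := by
    rw [← htval]
    unfold Dfun
    rw [← hrdef]
  exact build a b α β t r hα ht hrpos hkey hrα hDt

/-- **Lemma 2.4.** If `a > b`, `α ≥ 0`, `β < 0`, `4a + α² > 4b + β²` and additionally
`2a + α² ≤ 2b + β²`, then there exist `L` and `M ≥ 0` and radii `√M ≤ r_i < r_o`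
such that the rotationally symmetric model `u = L - |x|²/2 + M·log|x|` solves the
overdetermined problem with data `(a, α, b, β)` on the annulus `{r_i < |x| < r_o}`:
it attains the Dirichlet values `a`, `b` and the Neumann values `α`, `β` at the
radii `r_i`, `r_o`. -/
theorem exists_model_decreasing (a b α β : ℝ) (hab : a > b) (hα : 0 ≤ α) (hβ : β < 0)
    (h : 4 * a + α ^ 2 > 4 * b + β ^ 2) (hextra : 2 * a + α ^ 2 ≤ 2 * b + β ^ 2) :
    ∃ L M r_i r_o : ℝ, 0 ≤ M ∧ Real.sqrt M ≤ r_i ∧ r_i < r_o ∧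
      L - r_i ^ 2 / 2 + M * Real.log r_i = a ∧
      L - r_o ^ 2 / 2 + M * Real.log r_o = b ∧
      M - r_i ^ 2 = -α * r_i ∧
      M - r_o ^ 2 = β * r_o := by
  rcases eq_or_lt_of_le hextra with heq | hlt
  · -- equality case: explicit solution M = 0
    refine ⟨a + α^2/2, 0, α, -β, le_refl 0, by simp [hα], by nlinarith, ?_, ?_, by ring, by ring⟩
    · simp
    · have : β^2 - α^2 = 2*(a-b) := by linarith
      simp; nlinarith
  · have hba : α < -β := by nlinarith
    rcases hα.eq_or_lt with hα0 | hαpos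
    · -- α = 0 : find t_hi via tendsto
      subst hα0
      have h1 : Filter.Tendsto (fun t:ℝ => (t+1)⁻¹) atTop (nhds 0) :=
        tendsto_inv_atTop_zero.comp (tendsto_atTop_add_const_right atTop 1 tendsto_id)
      have h2 : Filter.Tendsto (fun t:ℝ => ((-β) + β*(t+1)⁻¹)^2/2) atTop (nhds (β^2/2)) := by
        have := ((h1.const_mul β).const_add (-β)).pow 2
        simpa using this.div_const 2
      have h3 : Filter.Tendsto (fun t:ℝ => (-(0:ℝ) - β*t)^2/(2*(t+1)^2)) atTop (nhds (β^2/2)) := by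
        apply h2.congr'
        filter_upwards [eventually_gt_atTop (0:ℝ)] with t ht
        have : t + 1 ≠ 0 := by linarith
        field_simp
        ring
      have hgt : ∀ᶠ t in atTop, a - b < (-(0:ℝ) - β*t)^2/(2*(t+1)^2) :=
        h3.eventually_const_lt (by nlinarith)
      obtain ⟨t_hi, hgt', ht1⟩ := (hgt.and (eventually_gt_atTop (1:ℝ))).exists
      have hc : 0 < -(0:ℝ) - β*t_hi := by nlinarith
      apply main_ivt a b 0 β hab le_rfl hβ hba h t_hi ht1 (by nlinarith)
      exact le_trans hgt'.le (Dfun_ge 0 β t_hi le_rfl hc ht1)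
    · -- α > 0 : t_hi = -β/α
      have ht1 : 1 < -β/α := (one_lt_div hαpos).mpr hba
      have hcap : α * (-β/α) ≤ -β := le_of_eq (by field_simp)
      apply main_ivt a b α β hab hα hβ hba h (-β/α) ht1 hcap
      have hs : (-β/α)^2 - 1 = (β^2 - α^2)/α^2 := by field_simp
      have hs0 : (0:ℝ) < (-β/α)^2 - 1 := by nlinarith
      have hr : (-α - β*(-β/α))/((-β/α)^2-1) = α := by
        rw [div_eq_iff hs0.ne']
        field_simp
        ring
      unfold Dfun
      rw [hr]
      have : α^2 - α*α = 0 := by ring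
      rw [this, zero_mul, sub_zero, hs]
      have hα2 : α^2 ≠ 0 := by positivity
      have heq : α^2 * ((β^2 - α^2)/α^2)/2 = (β^2 - α^2)/2 := by
        field_simp
      rw [heq]
      linarith
end

section
/- Let α, β ∈ ℝ with α < 0 and β ≥ 0, and for M > 0 define G(M) = α·√(α² + 4M) + β·√(β² + 4M) + 4M·log((−β + √(β² + 4M))/(α + √(α² + 4M))). Then G(M) tends to β² − α² as M tends to 0 from the right. Equivalently, the function F(M) = 4a + α² − 4b − β² + G(M) tends to 4a − 4b as M → 0⁺, for any a, b ∈ ℝ. -/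
open Filter

private lemma sqrt_tendsto (γ : ℝ) :
    Tendsto (fun M : ℝ => Real.sqrt (γ ^ 2 + 4 * M)) (nhdsWithin 0 (Set.Ioi 0))
      (nhds |γ|) := by
  have : Tendsto (fun M : ℝ => Real.sqrt (γ ^ 2 + 4 * M)) (nhds 0) (nhds |γ|) := by
    have h : Continuous fun M : ℝ => Real.sqrt (γ ^ 2 + 4 * M) :=
      Real.continuous_sqrt.comp (by continuity)
    simpa [Real.sqrt_sq_eq_abs] using h.tendsto 0
  exact this.mono_left nhdsWithin_le_nhds

/-- In the proof of Lemma 2.3: for `α < 0` and `β ≥ 0`, the function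
`G(M) = α√(α² + 4M) + β√(β² + 4M) + 4M·log((-β + √(β² + 4M))/(α + √(α² + 4M)))`
tends to `β² - α²` as `M → 0⁺`; equivalently,
`F(M) = 4a + α² - 4b - β² + G(M)` tends to `4a - 4b` as `M → 0⁺`. -/
theorem limit_F_at_zero (α β : ℝ) (hα : α < 0) (hβ : 0 ≤ β) :
    Tendsto (fun M : ℝ =>
        α * Real.sqrt (α ^ 2 + 4 * M) + β * Real.sqrt (β ^ 2 + 4 * M) +
          4 * M * Real.log ((-β + Real.sqrt (β ^ 2 + 4 * M)) /
            (α + Real.sqrt (α ^ 2 + 4 * M))))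
      (nhdsWithin 0 (Set.Ioi 0)) (nhds (β ^ 2 - α ^ 2)) ∧
    ∀ a b : ℝ, Tendsto (fun M : ℝ =>
        4 * a + α ^ 2 - 4 * b - β ^ 2 +
          (α * Real.sqrt (α ^ 2 + 4 * M) + β * Real.sqrt (β ^ 2 + 4 * M) +
            4 * M * Real.log ((-β + Real.sqrt (β ^ 2 + 4 * M)) /
              (α + Real.sqrt (α ^ 2 + 4 * M)))))
      (nhdsWithin 0 (Set.Ioi 0)) (nhds (4 * a - 4 * b)) := by
  have h4M : Tendsto (fun M : ℝ => 4 * M) (nhdsWithin 0 (Set.Ioi 0)) (nhds 0) := by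
    have := ((continuous_const.mul continuous_id : Continuous fun M : ℝ => 4 * M)).tendsto 0
    convert this.mono_left nhdsWithin_le_nhds using 2 <;> simp
  -- log term tends to 0
  have hlog : Tendsto (fun M : ℝ =>
      4 * M * Real.log ((-β + Real.sqrt (β ^ 2 + 4 * M)) /
        (α + Real.sqrt (α ^ 2 + 4 * M)))) (nhdsWithin 0 (Set.Ioi 0)) (nhds 0) := by
    -- rewrite on Ioi 0
    have hEq : ∀ M ∈ Set.Ioi (0:ℝ),
        4 * M * Real.log ((-β + Real.sqrt (β ^ 2 + 4 * M)) /
          (α + Real.sqrt (α ^ 2 + 4 * M))) =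
        4 * M * Real.log (Real.sqrt (α ^ 2 + 4 * M) - α) -
          4 * M * Real.log (β + Real.sqrt (β ^ 2 + 4 * M)) := by
      intro M hM
      rw [Set.mem_Ioi] at hM
      set A := Real.sqrt (α ^ 2 + 4 * M) with hA
      set B := Real.sqrt (β ^ 2 + 4 * M) with hB
      have hA2 : A ^ 2 = α ^ 2 + 4 * M := Real.sq_sqrt (by positivity)
      have hB2 : B ^ 2 = β ^ 2 + 4 * M := Real.sq_sqrt (by positivity)
      have hApos : -α < A := by
        nlinarith [Real.sqrt_nonneg (α ^ 2 + 4 * M)]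
      have hBpos : β < B := by
        nlinarith [Real.sqrt_nonneg (β ^ 2 + 4 * M)]
      have hAα : 0 < α + A := by linarith
      have hAmα : 0 < A - α := by linarith
      have hBβ : 0 < -β + B := by linarith
      have hBpβ : 0 < β + B := by linarith
      have hratio : (-β + B) / (α + A) = (A - α) / (β + B) := by
        rw [div_eq_div_iff hAα.ne' hBpβ.ne']
        nlinarith
      rw [hratio, Real.log_div hAmα.ne' hBpβ.ne']
      ring
    rw [tendsto_congr' (eventuallyEq_of_mem self_mem_nhdsWithin hEq)]
    have h1 : Tendsto (fun M : ℝ => 4 * M * Real.log (Real.sqrt (α ^ 2 + 4 * M) - α))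
        (nhdsWithin 0 (Set.Ioi 0)) (nhds 0) := by
      have hloglim : Tendsto (fun M : ℝ => Real.log (Real.sqrt (α ^ 2 + 4 * M) - α))
          (nhdsWithin 0 (Set.Ioi 0)) (nhds (Real.log (|α| - α))) := by
        have hcont : ContinuousAt Real.log (|α| - α) :=
          Real.continuousAt_log (by rw [abs_of_neg hα]; linarith)
        exact hcont.tendsto.comp ((sqrt_tendsto α).sub tendsto_const_nhds)
      simpa using h4M.mul hloglim
    have h2 : Tendsto (fun M : ℝ => 4 * M * Real.log (β + Real.sqrt (β ^ 2 + 4 * M)))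
        (nhdsWithin 0 (Set.Ioi 0)) (nhds 0) := by
      rcases eq_or_lt_of_le hβ with h0 | h0
      · -- β = 0
        have hEq2 : ∀ M ∈ Set.Ioi (0:ℝ),
            4 * M * Real.log (β + Real.sqrt (β ^ 2 + 4 * M)) =
            (1/2) * ((4 * M) * Real.log (4 * M)) := by
          intro M hM
          rw [Set.mem_Ioi] at hM
          rw [← h0]
          have : (0:ℝ) + Real.sqrt (0 ^ 2 + 4 * M) = Real.sqrt (4 * M) := by ring_nf
          rw [this, Real.log_sqrt (by positivity)]
          ring
        rw [tendsto_congr' (eventuallyEq_of_mem self_mem_nhdsWithin hEq2)]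
        have hc : Tendsto (fun x : ℝ => x * Real.log x) (nhds 0) (nhds 0) := by
          simpa using Real.continuous_mul_log.tendsto 0
        have := (hc.comp h4M).const_mul ((1:ℝ)/2)
        simpa using this
      · -- β > 0
        have hloglim : Tendsto (fun M : ℝ => Real.log (β + Real.sqrt (β ^ 2 + 4 * M)))
            (nhdsWithin 0 (Set.Ioi 0)) (nhds (Real.log (β + |β|))) := by
          have hcont : ContinuousAt Real.log (β + |β|) :=
            Real.continuousAt_log (by rw [abs_of_pos h0]; positivity)
          exact hcont.tendsto.comp (tendsto_const_nhds.add (sqrt_tendsto β))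
        simpa using h4M.mul hloglim
    simpa using h1.sub h2
  have hmain : Tendsto (fun M : ℝ =>
      α * Real.sqrt (α ^ 2 + 4 * M) + β * Real.sqrt (β ^ 2 + 4 * M) +
        4 * M * Real.log ((-β + Real.sqrt (β ^ 2 + 4 * M)) /
          (α + Real.sqrt (α ^ 2 + 4 * M))))
      (nhdsWithin 0 (Set.Ioi 0)) (nhds (β ^ 2 - α ^ 2)) := by
    have h1 : Tendsto (fun M : ℝ => α * Real.sqrt (α ^ 2 + 4 * M))
        (nhdsWithin 0 (Set.Ioi 0)) (nhds (α * |α|)) :=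
      tendsto_const_nhds.mul (sqrt_tendsto α)
    have h2 : Tendsto (fun M : ℝ => β * Real.sqrt (β ^ 2 + 4 * M))
        (nhdsWithin 0 (Set.Ioi 0)) (nhds (β * |β|)) :=
      tendsto_const_nhds.mul (sqrt_tendsto β)
    have := (h1.add h2).add hlog
    have heq : α * |α| + β * |β| + 0 = β ^ 2 - α ^ 2 := by
      rw [abs_of_neg hα, abs_of_nonneg hβ]; ring
    rwa [heq] at this
  refine ⟨hmain, fun a b => ?_⟩
  have := tendsto_const_nhds (x := 4 * a + α ^ 2 - 4 * b - β ^ 2)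
    (f := nhdsWithin (0:ℝ) (Set.Ioi 0)) |>.add hmain
  have heq : 4 * a + α ^ 2 - 4 * b - β ^ 2 + (β ^ 2 - α ^ 2) = 4 * a - 4 * b := by ring
  rwa [heq] at this
end

section
/- Fix L, M, k ∈ ℝ. For ψ > 0 with ψ² ≠ M, define v(ψ) = L − ψ²/2 + M·log ψ and φ(ψ) = 2v(ψ) − (ψ⁴ − 4Mψ² + 4M²·log ψ + k)/(2(M − ψ²)). Then φ is differentiable at every such ψ with derivative φ'(ψ) = ψ·(4Mψ² − ψ⁴ − 4M²·log ψ − k)/(M − ψ²)², and the identity (2φ(ψ) − 4v(ψ))·v'(ψ) = ((M − ψ²)/ψ)²·φ'(ψ) holds, where v'(ψ) = (M − ψ²)/ψ. -/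
/-- The multiplier `φ` of the refined Pohozaev argument: with
`v(ψ) = L - ψ²/2 + M·log ψ` and
`φ(ψ) = 2v(ψ) - (ψ⁴ - 4Mψ² + 4M²·log ψ + k)/(2(M - ψ²))`, for `ψ > 0` with
`ψ² ≠ M` the function `φ` has derivative
`φ'(ψ) = ψ·(4Mψ² - ψ⁴ - 4M²·log ψ - k)/(M - ψ²)²`, and the identity
`(2φ - 4v)·v' = ((M - ψ²)/ψ)²·φ'` holds, expressing `(2φ - 4u)/φ̇ = W₀`. -/
theorem multiplier_deriv_and_identity (L M k ψ : ℝ) (hψ : 0 < ψ) (hne : ψ ^ 2 ≠ M) :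
    HasDerivAt (fun s : ℝ =>
        2 * (L - s ^ 2 / 2 + M * Real.log s) -
          (s ^ 4 - 4 * M * s ^ 2 + 4 * M ^ 2 * Real.log s + k) / (2 * (M - s ^ 2)))
      (ψ * (4 * M * ψ ^ 2 - ψ ^ 4 - 4 * M ^ 2 * Real.log ψ - k) / (M - ψ ^ 2) ^ 2)
      ψ ∧
    (2 * (2 * (L - ψ ^ 2 / 2 + M * Real.log ψ) -
        (ψ ^ 4 - 4 * M * ψ ^ 2 + 4 * M ^ 2 * Real.log ψ + k) / (2 * (M - ψ ^ 2))) -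
      4 * (L - ψ ^ 2 / 2 + M * Real.log ψ)) * ((M - ψ ^ 2) / ψ) =
      ((M - ψ ^ 2) / ψ) ^ 2 *
        (ψ * (4 * M * ψ ^ 2 - ψ ^ 4 - 4 * M ^ 2 * Real.log ψ - k) /
          (M - ψ ^ 2) ^ 2) := by
  have hψ0 : ψ ≠ 0 := ne_of_gt hψ
  have hden : (M - ψ ^ 2) ≠ 0 := fun h => hne (by linarith [sub_eq_zero.mp h])
  have hden2 : (2 : ℝ) * (M - ψ ^ 2) ≠ 0 := by positivity
  constructor
  · have hlog : HasDerivAt Real.log ψ⁻¹ ψ := Real.hasDerivAt_log hψ0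
    have h1 : HasDerivAt (fun s : ℝ => 2 * (L - s ^ 2 / 2 + M * Real.log s))
        (2 * (0 - 2 * ψ / 2 + M * ψ⁻¹)) ψ := by
      have : HasDerivAt (fun s : ℝ => L - s ^ 2 / 2 + M * Real.log s)
          (0 - 2 * ψ / 2 + M * ψ⁻¹) ψ := by
        have hsq : HasDerivAt (fun s : ℝ => s ^ 2 / 2) (2 * ψ / 2) ψ := by
          simpa using ((hasDerivAt_pow 2 ψ).div_const 2)
        exact ((hasDerivAt_const ψ L).sub hsq).add (hlog.const_mul M)
      exact this.const_mul 2
    have hN : HasDerivAt (fun s : ℝ => s ^ 4 - 4 * M * s ^ 2 + 4 * M ^ 2 * Real.log s + k)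
        (4 * ψ ^ 3 - 4 * M * (2 * ψ) + 4 * M ^ 2 * ψ⁻¹) ψ := by
      have h4 : HasDerivAt (fun s : ℝ => s ^ 4) (4 * ψ ^ 3) ψ := by
        simpa using hasDerivAt_pow 4 ψ
      have h2 : HasDerivAt (fun s : ℝ => 4 * M * s ^ 2) (4 * M * (2 * ψ)) ψ := by
        simpa using (hasDerivAt_pow 2 ψ).const_mul (4 * M)
      exact (((h4.sub h2).add (hlog.const_mul (4 * M ^ 2)))).add_const k
    have hD : HasDerivAt (fun s : ℝ => 2 * (M - s ^ 2)) (2 * (0 - 2 * ψ)) ψ := by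
      have : HasDerivAt (fun s : ℝ => M - s ^ 2) (0 - 2 * ψ) ψ := by
        have h0 : HasDerivAt (fun s : ℝ => M - s ^ 2) (-(((2 : ℕ) : ℝ) * ψ ^ (2 - 1))) ψ :=
          (hasDerivAt_pow 2 ψ).const_sub M
        convert h0 using 1
        norm_num
      exact this.const_mul 2
    have h : HasDerivAt (fun s : ℝ =>
        2 * (L - s ^ 2 / 2 + M * Real.log s) -
          (s ^ 4 - 4 * M * s ^ 2 + 4 * M ^ 2 * Real.log s + k) / (2 * (M - s ^ 2))) _ ψ :=
      h1.sub (hN.div hD hden2)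
    convert h using 1
    field_simp
    ring
  · field_simp
    ring
end
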